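/- Let α ∈ (0,1), let k ≥ 2 be an integer, and let φ ∈ (0, π/2). Then α · sin(φ + απ/2 − αφ/k − φ/k) · sin(φ) ≤ k · sin(φ/k) · sin(απ/2 − αφ/k). -/

import Mathlib

open Real

/-
Two instances of the concavity of `sin` on `[0, π]`, in the form `t sin x ≤ sin (t x)` for
`t ∈ [0, 1]`, do all the work. With `t = 2/k` and the double-angle formula it gives
`sin φ ≤ k sin(φ/k) cos(φ/k)`; with `t = α` at `x = π/2 − φ/k` it gives
`α cos(φ/k) ≤ sin(απ/2 − αφ/k)`. Multiplying these and bounding the remaining sine on the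
left by `1` yields the inequality.
-/

theorem ConcaveOn.smul_le_map_smul {𝕜 E β : Type*} [Ring 𝕜] [PartialOrder 𝕜] [IsOrderedRing 𝕜]
    [AddCommMonoid E] [Module 𝕜 E] [AddCommMonoid β] [PartialOrder β] [Module 𝕜 β]
    {s : Set E} {f : E → β} (hf : ConcaveOn 𝕜 s f) (h0 : (0 : E) ∈ s) (hf0 : f 0 = 0)
    {x : E} (hx : x ∈ s) {t : 𝕜} (ht0 : 0 ≤ t) (ht1 : t ≤ 1) :
    t • f x ≤ f (t • x) := by
  have h := hf.2 hx h0 ht0 (sub_nonneg.2 ht1) (add_sub_cancel t 1)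
  simpa only [hf0, smul_zero, add_zero] using h

namespace Real

theorem mul_sin_le_sin_mul {t x : ℝ} (ht0 : 0 ≤ t) (ht1 : t ≤ 1) (hx0 : 0 ≤ x) (hxπ : x ≤ π) :
    t * sin x ≤ sin (t * x) :=
  strictConcaveOn_sin_Icc.concaveOn.smul_le_map_smul ⟨le_rfl, pi_pos.le⟩ sin_zero
    ⟨hx0, hxπ⟩ ht0 ht1

theorem sin_le_mul_sin_div_mul_cos_div {k x : ℝ} (hk : 2 ≤ k) (hx0 : 0 ≤ x) (hxπ : x ≤ π) :
    sin x ≤ k * sin (x / k) * cos (x / k) := by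
  have hk0 : 0 < k := by linarith
  have h := mul_sin_le_sin_mul (div_nonneg zero_le_two hk0.le)
    ((div_le_one hk0).2 hk) hx0 hxπ
  rw [show 2 / k * x = 2 * (x / k) by ring, sin_two_mul, div_mul_eq_mul_div,
    div_le_iff₀ hk0] at h
  linarith

theorem mul_cos_le_sin_mul_pi_div_two_sub {a ψ : ℝ} (ha0 : 0 ≤ a) (ha1 : a ≤ 1)
    (hψ : ψ ∈ Set.Icc (-(π / 2)) (π / 2)) :
    a * cos ψ ≤ sin (a * (π / 2 - ψ)) := by
  rw [← sin_pi_div_two_sub]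
  exact mul_sin_le_sin_mul ha0 ha1 (by linarith [hψ.2]) (by linarith [hψ.1])

end Real

theorem gl_key_derivative_inequality (α φ : ℝ) (hα : α ∈ Set.Ioo (0:ℝ) 1)
    (k : ℕ) (hk : 2 ≤ k) (hφ : φ ∈ Set.Ioo (0:ℝ) (π / 2)) :
    α * Real.sin (φ + α * π / 2 - α * φ / (k:ℝ) - φ / (k:ℝ)) * Real.sin φ ≤
      (k:ℝ) * Real.sin (φ / (k:ℝ)) * Real.sin (α * π / 2 - α * φ / (k:ℝ)) := by
  obtain ⟨hα0, hα1⟩ := hα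
  obtain ⟨hφ0, hφ1⟩ := hφ
  have hk2 : (2 : ℝ) ≤ k := by exact_mod_cast hk
  have hψ0 : 0 ≤ φ / k := by positivity
  have hψ1 : φ / k ≤ φ := div_le_self hφ0.le (by linarith)
  have hsinφ : 0 ≤ sin φ := sin_nonneg_of_nonneg_of_le_pi hφ0.le (by linarith [pi_pos])
  have hsinψ : 0 ≤ sin (φ / k) := sin_nonneg_of_nonneg_of_le_pi hψ0 (by linarith [pi_pos])
  calc α * sin (φ + α * π / 2 - α * φ / k - φ / k) * sin φ
      ≤ α * 1 * sin φ := by gcongr; exact sin_le_one _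
    _ ≤ α * (k * sin (φ / k) * cos (φ / k)) := by
        rw [mul_one]
        gcongr
        exact sin_le_mul_sin_div_mul_cos_div hk2 hφ0.le (by linarith [pi_pos])
    _ = k * sin (φ / k) * (α * cos (φ / k)) := by ring
    _ ≤ k * sin (φ / k) * sin (α * π / 2 - α * φ / k) := by
        rw [show α * π / 2 - α * φ / k = α * (π / 2 - φ / k) by ring]
        gcongr
        exact mul_cos_le_sin_mul_pi_div_two_sub hα0.le hα1.le ⟨by linarith, by linarith⟩
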